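/- For every triple of positive integers k, ℓ, r with k ≥ 3 and r ≥ 3, there exists a positive integer N = N(k,ℓ,r) such that for every integer n ≥ N, rx_{k,ℓ}(K_{r×n}) ≤ k + 1. -/

import Mathlib

open SimpleGraph

/-- `T` is a rainbow `S`-tree in `G` under edge-coloring `c`:
its vertices contain `S`, it is a tree, and `c` is injective on its edges. -/
def IsRainbowSTree {V β : Type*} (G : SimpleGraph V) (c : Sym2 V → β)
    (S : Set V) (T : G.Subgraph) : Prop :=
  S ⊆ T.verts ∧ T.coe.IsTree ∧ Set.InjOn c T.edgeSet

/-- A family of `S`-trees is internally disjoint: pairwise edge-disjoint, and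
the vertex sets of two distinct members meet exactly in `S`. -/
def InternallyDisjoint {V : Type*} {G : SimpleGraph V} (S : Set V)
    {ι : Type*} (T : ι → G.Subgraph) : Prop :=
  ∀ i j, i ≠ j → (T i).edgeSet ∩ (T j).edgeSet = ∅ ∧ (T i).verts ∩ (T j).verts = S

/-- The coloring `c` provides, for every set `S` of `k` vertices,
`ℓ` internally disjoint rainbow `S`-trees. -/
def HasRainbowSTrees {V β : Type*} (G : SimpleGraph V) (c : Sym2 V → β) (k ℓ : ℕ) : Prop :=
  ∀ S : Finset V, S.card = k →
    ∃ T : Fin ℓ → G.Subgraph,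
      (∀ i, IsRainbowSTree G c (S : Set V) (T i)) ∧ InternallyDisjoint (S : Set V) T

/-- The `(k,ℓ)`-rainbow index `rx_{k,ℓ}(G)`: the minimum number `t` of colors such that
some edge-coloring of `G` with `t` colors gives, for every `k`-set `S`,
`ℓ` internally disjoint rainbow `S`-trees. -/
noncomputable def rainbowIndex {V : Type*} (G : SimpleGraph V) (k ℓ : ℕ) : ℕ :=
  sInf {t : ℕ | ∃ c : Sym2 V → Fin t, HasRainbowSTrees G c k ℓ}

/-!
Colour the edges of `K_{r×n}` uniformly at random with `k + 1` colours. For a `k`-set `S` and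
two vertices `u`, `v` outside `S` in different parts, joining `u` to `v`, the vertices of `S`
in `u`'s part to `v` and all other vertices of `S` to `u` gives an `S`-tree with exactly
`k + 1` edges, which is rainbow with probability `(k+1)! / (k+1)^(k+1)`. Split `ℓ·m` such
double stars with pairwise distinct centres, `m = ⌊n / (ℓ + 1)⌋`, into `ℓ` groups of `m`: they
are internally disjoint with disjoint edge sets, so a group contains no rainbow tree with
probability `(1 - (k+1)!/(k+1)^(k+1))^m`. Picking one rainbow tree per group gives the `ℓ`
trees, and a union bound over the at most `(rn)^k` sets `S` and the `ℓ` groups fails with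
probability `< 1` once `n` is large, as the bound decays exponentially in `n`.
-/

open Finset Filter Function
open scoped Nat

section Colorings

variable {α κ : Type*}

theorem ncard_inter_mul_card_fun {E : Set α} {A B : Set (α → κ)}
    (hA : ∀ ⦃c c'⦄, Set.EqOn c c' E → c ∈ A → c' ∈ A)
    (hB : ∀ ⦃c c'⦄, Set.EqOn c c' Eᶜ → c ∈ B → c' ∈ B) :
    (A ∩ B).ncard * Nat.card (α → κ) = A.ncard * B.ncard := by
  classical
  have hmix (c d : α → κ) : E.piecewise (E.piecewise c d) (E.piecewise d c) = c := by
    ext a; by_cases ha : a ∈ E <;> simp [ha]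
  -- Exchanging two colourings outside `E` keeps membership in `A` of the first and moves
  -- membership in `B` from the first to the second.
  let swap : ↥(A ∩ B) × (α → κ) ≃ ↥A × ↥B :=
    { toFun := fun p =>
        (⟨E.piecewise p.1 p.2, hA (Set.piecewise_eqOn ..).symm p.1.2.1⟩,
          ⟨E.piecewise p.2 p.1, hB (Set.piecewise_eqOn_compl ..).symm p.1.2.2⟩)
      invFun := fun p =>
        (⟨E.piecewise p.1 p.2, hA (Set.piecewise_eqOn ..).symm p.1.2,
            hB (Set.piecewise_eqOn_compl ..).symm p.2.2⟩, E.piecewise p.2 p.1)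
      left_inv := fun p => by ext1 <;> simp only [hmix]
      right_inv := fun p => by ext1 <;> simp only [hmix] }
  simpa only [Nat.card_prod, Nat.card_coe_set_eq] using Nat.card_congr swap

-- Independence of events that depend on pairwise disjoint sets of coordinates,
-- `P(⋂ A_j) = ∏ P(A_j)` with the probabilities multiplied out.
theorem ncard_biInter_mul_card_fun_pow {ι : Type*} (J : Finset ι) {E : ι → Set α}
    (hE : (J : Set ι).PairwiseDisjoint E) {A : ι → Set (α → κ)}
    (hA : ∀ j ⦃c c'⦄, Set.EqOn c c' (E j) → c ∈ A j → c' ∈ A j) :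
    (⋂ j ∈ J, A j).ncard * Nat.card (α → κ) ^ #J
      = Nat.card (α → κ) * ∏ j ∈ J, (A j).ncard := by
  classical
  induction J using Finset.induction_on with
  | empty => simp
  | insert a J ha ih =>
    rw [coe_insert, Set.pairwiseDisjoint_insert_of_notMem (mod_cast ha)] at hE
    have hrest :
        ∀ ⦃c c'⦄, Set.EqOn c c' (E a)ᶜ → c ∈ ⋂ j ∈ J, A j → c' ∈ ⋂ j ∈ J, A j := by
      simp only [Set.mem_iInter]
      exact fun c c' hcc' hc j hj =>
        hA j (hcc'.mono (Set.disjoint_left.1 (hE.2 j hj).symm)) (hc j hj)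
    rw [set_biInter_insert, card_insert_of_notMem ha, prod_insert ha, pow_succ,
      mul_comm _ (Nat.card _), ← mul_assoc, ncard_inter_mul_card_fun (hA a) hrest, mul_assoc,
      ih hE.1]
    ring

theorem ncard_setOf_injOn [Finite α] [Finite κ] (E : Set α) :
    {c : α → κ | Set.InjOn c E}.ncard
      = (Nat.card κ).descFactorial E.ncard * Nat.card κ ^ (Nat.card α - E.ncard) := by
  classical
  have := Fintype.ofFinite α
  have := Fintype.ofFinite κ
  let split : {c : α → κ // Set.InjOn c E} ≃ (E ↪ κ) × (↥Eᶜ → κ) :=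
    (Equiv.subtypeEquiv (Equiv.piEquivPiSubtypeProd (· ∈ E) fun _ => κ) fun c =>
      Set.injOn_iff_injective).trans
      ((Equiv.prodSubtypeFstEquivSubtypeProd (p := Injective)).trans
        (Equiv.prodCongr (Equiv.subtypeInjectiveEquivEmbedding _ _) (Equiv.refl _)))
  rw [← Nat.card_coe_set_eq, Set.coe_ofPred, Nat.card_congr split, Nat.card_prod,
    Nat.card_eq_fintype_card (α := E ↪ κ), Fintype.card_embedding_eq, Nat.card_fun,
    ← Nat.card_eq_fintype_card, ← Nat.card_eq_fintype_card, Nat.card_coe_set_eq,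
    Nat.card_coe_set_eq, Set.ncard_compl]

theorem ncard_setOf_not_injOn_mul [Finite α] [Finite κ] {E : Set α} (hE : E.ncard = Nat.card κ) :
    {c : α → κ | ¬ Set.InjOn c E}.ncard * Nat.card κ ^ Nat.card κ
      = (Nat.card κ ^ Nat.card κ - (Nat.card κ)!) * Nat.card (α → κ) := by
  set q := Nat.card κ
  have hΩ : Nat.card (α → κ) = q ^ q * q ^ (Nat.card α - q) := by
    rw [Nat.card_fun, ← pow_add, Nat.add_sub_cancel' (hE ▸ Set.ncard_le_card E)]
  rw [← Set.compl_ofPred, Set.ncard_compl, ncard_setOf_injOn, hE, Nat.descFactorial_self, hΩ,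
    ← Nat.sub_mul]
  ring

theorem ncard_biInter_not_injOn_mul [Finite α] [Finite κ] [Nonempty κ] {ι : Type*}
    (J : Finset ι) {E : ι → Set α} (hE : (J : Set ι).PairwiseDisjoint E)
    (hcard : ∀ j ∈ J, (E j).ncard = Nat.card κ) :
    (⋂ j ∈ J, {c : α → κ | ¬ Set.InjOn c (E j)}).ncard * (Nat.card κ ^ Nat.card κ) ^ #J
      = Nat.card (α → κ) * (Nat.card κ ^ Nat.card κ - (Nat.card κ)!) ^ #J := by
  set Ω := Nat.card (α → κ)
  have hindep := ncard_biInter_mul_card_fun_pow J hE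
    (A := fun j => {c : α → κ | ¬ Set.InjOn c (E j)}) fun j c c' hcc' hc hc' =>
      hc (hc'.congr hcc'.symm)
  refine Nat.eq_of_mul_eq_mul_right (pow_pos Nat.card_pos #J : 0 < Ω ^ #J) ?_
  calc _ = (⋂ j ∈ J, {c : α → κ | ¬ Set.InjOn c (E j)}).ncard * Ω ^ #J
        * (Nat.card κ ^ Nat.card κ) ^ #J := by ring
    _ = Ω * ∏ j ∈ J,
          ({c : α → κ | ¬ Set.InjOn c (E j)}.ncard * Nat.card κ ^ Nat.card κ) := by
      rw [hindep, prod_mul_distrib, prod_const, mul_assoc]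
    _ = _ := by
      rw [prod_congr rfl fun j hj => ncard_setOf_not_injOn_mul (hcard j hj), prod_mul_distrib,
        prod_const, prod_const]
      ring

end Colorings

section RainbowTrees

variable {V : Type*} {G : SimpleGraph V}

theorem exists_rainbow_of_forall_exists_injOn {β ι P : Type*} {S : Set V}
    {D : ι × P → G.Subgraph} (hD : ∀ p, S ⊆ (D p).verts ∧ (D p).coe.IsTree)
    (hdisj : InternallyDisjoint S D) {c : Sym2 V → β}
    (hc : ∀ t, ∃ j, Set.InjOn c (D (t, j)).edgeSet) :
    ∃ T : ι → G.Subgraph, (∀ t, IsRainbowSTree G c S (T t)) ∧ InternallyDisjoint S T := by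
  choose j hj using hc
  exact ⟨fun t => D (t, j t), fun t => ⟨(hD _).1, (hD _).2, hj t⟩,
    fun t t' htt' => hdisj _ _ fun h => htt' (congrArg Prod.fst h)⟩

theorem ncard_not_exists_rainbow_mul_le [Finite V] {κ : Type*} [Finite κ] [Nonempty κ]
    {ℓ m : ℕ} (S : Set V) (D : Fin ℓ × Fin m → G.Subgraph)
    (hD : ∀ p, S ⊆ (D p).verts ∧ (D p).coe.IsTree ∧ (D p).edgeSet.ncard = Nat.card κ)
    (hdisj : InternallyDisjoint S D) :
    {c : Sym2 V → κ | ¬ ∃ T : Fin ℓ → G.Subgraph,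
        (∀ t, IsRainbowSTree G c S (T t)) ∧ InternallyDisjoint S T}.ncard
        * (Nat.card κ ^ Nat.card κ) ^ m
      ≤ ℓ * (Nat.card (Sym2 V → κ) * (Nat.card κ ^ Nat.card κ - (Nat.card κ)!) ^ m) := by
  set fails : Fin ℓ → Set (Sym2 V → κ) := fun t =>
    ⋂ j ∈ (univ : Finset (Fin m)), {c | ¬ Set.InjOn c (D (t, j)).edgeSet}
  have hsub : {c : Sym2 V → κ | ¬ ∃ T : Fin ℓ → G.Subgraph,
      (∀ t, IsRainbowSTree G c S (T t)) ∧ InternallyDisjoint S T} ⊆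
        ⋃ t ∈ univ, fails t := by
    intro c hc
    simp only [fails, Set.mem_iUnion, Set.mem_iInter, Set.mem_ofPred_eq, mem_univ,
      forall_const, exists_const]
    by_contra! h
    exact hc (exists_rainbow_of_forall_exists_injOn (fun p => ⟨(hD p).1, (hD p).2.1⟩) hdisj h)
  have hfails (t : Fin ℓ) :
      (fails t).ncard * (Nat.card κ ^ Nat.card κ) ^ m
        = Nat.card (Sym2 V → κ) * (Nat.card κ ^ Nat.card κ - (Nat.card κ)!) ^ m := by
    have := ncard_biInter_not_injOn_mul univ (E := fun j => (D (t, j)).edgeSet)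
      (fun j _ j' _ hjj' => Set.disjoint_iff_inter_eq_empty.2
        (hdisj _ _ fun h => hjj' (congrArg Prod.snd h)).1)
      fun j _ => (hD _).2.2
    rwa [card_univ, Fintype.card_fin] at this
  calc _ ≤ (⋃ t ∈ univ, fails t).ncard * (Nat.card κ ^ Nat.card κ) ^ m :=
        Nat.mul_le_mul_right _ (Set.ncard_le_ncard hsub)
    _ ≤ (∑ t, (fails t).ncard) * (Nat.card κ ^ Nat.card κ) ^ m :=
        Nat.mul_le_mul_right _ (set_ncard_biUnion_le _ _)
    _ = _ := by simp only [sum_mul, hfails, sum_const, card_univ, Fintype.card_fin, smul_eq_mul]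

theorem rainbowIndex_le_of_forall_exists_trees [Fintype V] {k ℓ m q : ℕ} [NeZero q]
    (htrees : ∀ S : Finset V, #S = k → ∃ D : Fin ℓ × Fin m → G.Subgraph,
      (∀ p, ↑S ⊆ (D p).verts ∧ (D p).coe.IsTree ∧ (D p).edgeSet.ncard = q) ∧
        InternallyDisjoint (S : Set V) D)
    (hcount : (Fintype.card V).choose k * ℓ * (q ^ q - q !) ^ m < (q ^ q) ^ m) :
    rainbowIndex G k ℓ ≤ q := by
  set Ω := Nat.card (Sym2 V → Fin q)
  set bad : Finset V → Set (Sym2 V → Fin q) := fun S => {c | ¬ ∃ T : Fin ℓ → G.Subgraph,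
    (∀ t, IsRainbowSTree G c S (T t)) ∧ InternallyDisjoint (S : Set V) T}
  have hbad : ∀ S ∈ powersetCard k univ,
      (bad S).ncard * (q ^ q) ^ m ≤ ℓ * (Ω * (q ^ q - q !) ^ m) := by
    intro S hS
    obtain ⟨D, hD, hdisj⟩ := htrees S (mem_powersetCard.1 hS).2
    have := ncard_not_exists_rainbow_mul_le (κ := Fin q) (S : Set V) D (by simpa using hD) hdisj
    rwa [Nat.card_eq_fintype_card, Fintype.card_fin] at this
  have hsmall : (⋃ S ∈ powersetCard k univ, bad S).ncard < Ω := by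
    refine lt_of_mul_lt_mul_right (a := (q ^ q) ^ m) ?_ (Nat.zero_le _)
    calc _ ≤ (∑ S ∈ powersetCard k univ, (bad S).ncard) * (q ^ q) ^ m :=
          Nat.mul_le_mul_right _ (set_ncard_biUnion_le _ _)
      _ ≤ ∑ S ∈ powersetCard k univ, ℓ * (Ω * (q ^ q - q !) ^ m) := by
          rw [sum_mul]; exact sum_le_sum hbad
      _ = (Fintype.card V).choose k * ℓ * (q ^ q - q !) ^ m * Ω := by
          rw [sum_const, card_powersetCard, card_univ, smul_eq_mul]; ring
      _ < (q ^ q) ^ m * Ω := Nat.mul_lt_mul_of_pos_right hcount Nat.card_pos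
      _ = Ω * (q ^ q) ^ m := mul_comm ..
  obtain ⟨c, hc⟩ : ∃ c, c ∉ ⋃ S ∈ powersetCard k univ, bad S := by
    by_contra! h
    rw [Set.eq_univ_of_forall h, Set.ncard_univ] at hsmall
    exact lt_irrefl _ hsmall
  refine Nat.sInf_le ⟨c, fun S hS => ?_⟩
  simp only [Set.mem_iUnion, mem_powersetCard, subset_univ, true_and, not_exists] at hc
  simpa [bad] using hc S hS

end RainbowTrees

namespace SimpleGraph.Subgraph

variable {V : Type*} {G : SimpleGraph V}

def ofEdgeSet (W : Set V) (E : Set (Sym2 V)) (hE : E ⊆ G.edgeSet)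
    (hW : ∀ e ∈ E, ∀ a ∈ e, a ∈ W) : G.Subgraph where
  verts := W
  Adj a b := s(a, b) ∈ E
  adj_sub h := hE h
  edge_vert h := hW _ h _ (Sym2.mem_mk_left _ _)
  symm := ⟨fun _ _ h => by rwa [Sym2.eq_swap]⟩

@[simp]
theorem edgeSet_ofEdgeSet {W : Set V} {E : Set (Sym2 V)} (hE : E ⊆ G.edgeSet)
    (hW : ∀ e ∈ E, ∀ a ∈ e, a ∈ W) : (ofEdgeSet W E hE hW).edgeSet = E := by
  ext e; induction e; exact Subgraph.mem_edgeSet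

theorem ncard_edgeSet_coe (G' : G.Subgraph) : Nat.card G'.coe.edgeSet = G'.edgeSet.ncard := by
  rw [← image_coe_edgeSet_coe, Set.ncard_image_of_injective _
    (Sym2.map.injective Subtype.val_injective), Nat.card_coe_set_eq]

theorem isTree_coe_of_ncard {G' : G.Subgraph} (hfin : G'.verts.Finite)
    (hconn : G'.coe.Connected) (hcard : G'.edgeSet.ncard + 1 = G'.verts.ncard) : G'.coe.IsTree :=
  have := hfin.to_subtype
  isTree_iff_connected_and_card.2 ⟨hconn, by rwa [ncard_edgeSet_coe, Nat.card_coe_set_eq]⟩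

end SimpleGraph.Subgraph

section DoubleStar

variable {ι : Type*} {V : ι → Type*} [DecidableEq ι] [∀ i, DecidableEq (V i)]

def doubleStarEdges (S : Finset (Σ i, V i)) (u v : Σ i, V i) : Finset (Sym2 (Σ i, V i)) :=
  insert s(u, v) (S.image fun s => s(if s.1 = u.1 then v else u, s))

variable {S : Finset (Σ i, V i)} {u v : Σ i, V i} {e : Sym2 (Σ i, V i)}

theorem mem_or_mem_of_mem_doubleStarEdges (he : e ∈ doubleStarEdges S u v) :
    u ∈ e ∨ v ∈ e := by
  simp only [doubleStarEdges, mem_insert, mem_image] at he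
  rcases he with rfl | ⟨s, -, rfl⟩
  · exact .inl (Sym2.mem_mk_left _ _)
  · split_ifs <;> simp

theorem mem_of_mem_doubleStarEdges (he : e ∈ doubleStarEdges S u v) {a : Σ i, V i}
    (ha : a ∈ e) :
    a ∈ insert u (insert v (S : Set (Σ i, V i))) := by
  simp only [doubleStarEdges, mem_insert, mem_image] at he
  rcases he with rfl | ⟨s, hs, rfl⟩
  · rcases Sym2.mem_iff.1 ha with rfl | rfl <;> simp
  · rcases Sym2.mem_iff.1 ha with rfl | rfl
    · split_ifs <;> simp
    · simp [hs]

theorem doubleStarEdges_subset_edgeSet (huv : u.1 ≠ v.1) :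
    ↑(doubleStarEdges S u v) ⊆ (completeMultipartiteGraph V).edgeSet := by
  intro e he
  simp only [doubleStarEdges, coe_insert, coe_image, Set.mem_insert_iff, Set.mem_image] at he
  rcases he with rfl | ⟨s, -, rfl⟩
  · exact huv
  · split_ifs with h
    · exact fun h' => huv (h.symm.trans h'.symm)
    · exact Ne.symm h

theorem card_doubleStarEdges (hu : u ∉ S) (hv : v ∉ S) (huv : u ≠ v) :
    #(doubleStarEdges S u v) = #S + 1 := by
  have hinj : Set.InjOn (fun s => s(if s.1 = u.1 then v else u, s)) S := by
    intro a ha b hb hab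
    rcases Sym2.eq_iff.1 hab with ⟨-, h⟩ | ⟨h, -⟩
    · exact h
    · split_ifs at h <;> subst h <;> contradiction
  have hnotMem : s(u, v) ∉ S.image fun s => s(if s.1 = u.1 then v else u, s) := by
    simp only [mem_image, not_exists, not_and]
    intro s hs h
    rcases Sym2.eq_iff.1 h with ⟨-, rfl⟩ | ⟨-, rfl⟩ <;> contradiction
  rw [doubleStarEdges, card_insert_of_notMem hnotMem, card_image_of_injOn hinj]

def doubleStar (S : Finset (Σ i, V i)) (u v : Σ i, V i) (huv : u.1 ≠ v.1) :
    (completeMultipartiteGraph V).Subgraph :=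
  .ofEdgeSet (insert u (insert v S)) (doubleStarEdges S u v) (doubleStarEdges_subset_edgeSet huv)
    fun _ he _ ha => mem_of_mem_doubleStarEdges he ha

theorem doubleStar_verts (huv : u.1 ≠ v.1) :
    (doubleStar S u v huv).verts = insert u (insert v ↑S) := rfl

theorem doubleStar_edgeSet (huv : u.1 ≠ v.1) :
    (doubleStar S u v huv).edgeSet = ↑(doubleStarEdges S u v) :=
  Subgraph.edgeSet_ofEdgeSet ..

theorem doubleStar_connected (huv : u.1 ≠ v.1) : (doubleStar S u v huv).coe.Connected := by
  set T := doubleStar S u v huv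
  have hu : u ∈ T.verts := Set.mem_insert _ _
  have hv : T.coe.Reachable ⟨u, hu⟩ ⟨v, Set.mem_insert_of_mem _ (Set.mem_insert _ _)⟩ :=
    (show T.Adj u v from mem_insert_self _ _).coe.reachable
  refine (connected_iff_exists_forall_reachable _).2 ⟨⟨u, hu⟩, ?_⟩
  rintro ⟨a, rfl | rfl | hs⟩
  · rfl
  · exact hv
  · by_cases h : a.1 = u.1
    · have hadj : T.Adj v a := mem_insert_of_mem (mem_image.2 ⟨a, hs, by simp [h]⟩)
      exact hv.trans hadj.coe.reachable
    · have hadj : T.Adj u a := mem_insert_of_mem (mem_image.2 ⟨a, hs, by simp [h]⟩)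
      exact hadj.coe.reachable

theorem doubleStar_isTree (huv : u.1 ≠ v.1) (hu : u ∉ S) (hv : v ∉ S) :
    (doubleStar S u v huv).coe.IsTree := by
  have hne : u ≠ v := fun h => huv (congrArg Sigma.fst h)
  have hverts : (doubleStar S u v huv).verts = ↑(insert u (insert v S)) := by
    simp [doubleStar_verts]
  refine Subgraph.isTree_coe_of_ncard (hverts ▸ finite_toSet _) (doubleStar_connected huv) ?_
  rw [hverts, doubleStar_edgeSet, Set.ncard_coe_finset, Set.ncard_coe_finset,
    card_doubleStarEdges hu hv hne, card_insert_of_notMem (by simp [hne, hu]),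
    card_insert_of_notMem hv]

theorem internallyDisjoint_doubleStar {P : Type*} {u v : P → Σ i, V i}
    (hparts : ∀ p, (u p).1 ≠ (v p).1) (hS : ∀ p, u p ∉ S ∧ v p ∉ S)
    (hinj : Injective (Sum.elim u v)) :
    InternallyDisjoint (S : Set (Σ i, V i)) fun p => doubleStar S (u p) (v p) (hparts p) := by
  intro p p' hpp'
  have hfresh :
      ∀ x, (x = u p ∨ x = v p) → x ∉ insert (u p') (insert (v p') (S : Set _)) := by
    rintro x (rfl | rfl) (h | h | h)
    exacts [hinj.ne (Sum.inl_injective.ne hpp') h, hinj.ne Sum.inl_ne_inr h, (hS p).1 h,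
      hinj.ne Sum.inr_ne_inl h, hinj.ne (Sum.inr_injective.ne hpp') h, (hS p).2 h]
  constructor
  · refine Set.disjoint_iff_inter_eq_empty.1 (Set.disjoint_left.2 fun e he he' => ?_)
    rw [doubleStar_edgeSet, mem_coe] at he he'
    rcases mem_or_mem_of_mem_doubleStarEdges he with h | h
    · exact hfresh _ (.inl rfl) (mem_of_mem_doubleStarEdges he' h)
    · exact hfresh _ (.inr rfl) (mem_of_mem_doubleStarEdges he' h)
  · ext a
    refine ⟨fun ⟨ha, ha'⟩ => ?_, fun ha => ⟨.inr (.inr ha), .inr (.inr ha)⟩⟩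
    rcases ha with rfl | rfl | ha
    exacts [(hfresh _ (.inl rfl) ha').elim, (hfresh _ (.inr rfl) ha').elim, ha]

theorem exists_embedding_forall_sigma_mk_notMem {P : Type*} [Fintype P] (i : ι) [Fintype (V i)]
    (S : Finset (Σ i, V i)) (hcard : #S + Fintype.card P ≤ Fintype.card (V i)) :
    ∃ f : P ↪ V i, ∀ p, ⟨i, f p⟩ ∉ S := by
  have hS : Fintype.card {x : V i // ⟨i, x⟩ ∈ S} ≤ #S := by
    simpa using Fintype.card_le_of_injective (β := S) (fun x => ⟨⟨i, x.1⟩, x.2⟩)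
      fun x y h => Subtype.ext (sigma_mk_injective (congrArg Subtype.val h))
  have hP : Fintype.card P ≤ Fintype.card {x : V i // ⟨i, x⟩ ∉ S} := by
    rw [Fintype.card_subtype_compl]; omega
  obtain ⟨f⟩ := Function.Embedding.nonempty_of_card_le hP
  exact ⟨f.trans (.subtype _), fun p => (f p).2⟩

theorem exists_doubleStar_family {P : Type*} [Fintype P] [∀ i, Fintype (V i)] {i j : ι}
    (hij : i ≠ j) (S : Finset (Σ i, V i)) (hi : #S + Fintype.card P ≤ Fintype.card (V i))
    (hj : #S + Fintype.card P ≤ Fintype.card (V j)) :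
    ∃ D : P → (completeMultipartiteGraph V).Subgraph,
      (∀ p, ↑S ⊆ (D p).verts ∧ (D p).coe.IsTree ∧ (D p).edgeSet.ncard = #S + 1) ∧
        InternallyDisjoint (S : Set (Σ i, V i)) D := by
  obtain ⟨f, hf⟩ := exists_embedding_forall_sigma_mk_notMem i S hi
  obtain ⟨g, hg⟩ := exists_embedding_forall_sigma_mk_notMem j S hj
  have hinj : Injective (Sum.elim (fun p => (⟨i, f p⟩ : Σ i, V i)) fun p => ⟨j, g p⟩) :=
    (sigma_mk_injective.comp f.injective).sumElim (sigma_mk_injective.comp g.injective)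
      fun _ _ h => hij (congrArg Sigma.fst h)
  refine ⟨_, fun p => ⟨?_, doubleStar_isTree hij (hf p) (hg p), ?_⟩,
    internallyDisjoint_doubleStar (fun _ => hij) (fun p => ⟨hf p, hg p⟩) hinj⟩
  · exact fun a ha => .inr (.inr ha)
  · rw [doubleStar_edgeSet, Set.ncard_coe_finset,
      card_doubleStarEdges (hf p) (hg p) fun h => hij (congrArg Sigma.fst h)]

end DoubleStar

theorem eventually_mul_pow_mul_pow_lt (C k : ℕ) {a b : ℕ} (hab : a < b) :
    ∀ᶠ m : ℕ in atTop, C * m ^ k * a ^ m < b ^ m := by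
  have hb : (0 : ℝ) < b := by exact_mod_cast (Nat.zero_le a).trans_lt hab
  have hlim := (tendsto_pow_const_mul_const_pow_of_lt_one k (by positivity)
    ((div_lt_one hb).2 (by exact_mod_cast hab : (a : ℝ) < b))).const_mul (C : ℝ)
  rw [mul_zero] at hlim
  filter_upwards [hlim.eventually_lt_const one_pos] with m hm
  have hbm : (0 : ℝ) < b ^ m := pow_pos hb m
  suffices (C * m ^ k * a ^ m : ℝ) < b ^ m by exact_mod_cast this
  calc (C * m ^ k * a ^ m : ℝ) = C * (m ^ k * (a / b : ℝ) ^ m) * b ^ m := by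
        rw [div_pow]; field_simp
    _ < 1 * b ^ m := mul_lt_mul_of_pos_right hm hbm
    _ = b ^ m := one_mul _

theorem eventually_mul_pow_mul_pow_div_lt (C k : ℕ) {d : ℕ} (hd : d ≠ 0) {a b : ℕ}
    (hab : a < b) : ∀ᶠ n : ℕ in atTop, C * n ^ k * a ^ (n / d) < b ^ (n / d) := by
  have hdiv := Nat.tendsto_div_const_atTop hd
  filter_upwards [hdiv.eventually (eventually_mul_pow_mul_pow_lt (C * (2 * d) ^ k) k hab),
    hdiv.eventually_ge_atTop 1] with n hn hn1
  have hle : n ≤ 2 * d * (n / d) := by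
    have := Nat.lt_mul_div_succ n (Nat.pos_of_ne_zero hd)
    nlinarith
  calc C * n ^ k * a ^ (n / d) ≤ C * (2 * d * (n / d)) ^ k * a ^ (n / d) := by gcongr
    _ = C * (2 * d) ^ k * (n / d) ^ k * a ^ (n / d) := by ring
    _ < b ^ (n / d) := hn

theorem rx_multipartite_le_succ_general (k ℓ r : ℕ) (hr : 3 ≤ r) :
    ∃ N : ℕ, 0 < N ∧ ∀ n : ℕ, N ≤ n →
      rainbowIndex (completeMultipartiteGraph (fun _ : Fin r => Fin n)) k ℓ ≤ k + 1 := by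
  set q := k + 1
  have hd : ℓ + 1 ≠ 0 := ℓ.succ_ne_zero
  have hlt : q ^ q - q ! < q ^ q := Nat.sub_lt (by positivity) q.factorial_pos
  obtain ⟨N, hN⟩ := eventually_atTop.1
    ((eventually_mul_pow_mul_pow_div_lt (ℓ * r ^ k) k hd hlt).and
      ((Nat.tendsto_div_const_atTop hd).eventually_ge_atTop k))
  refine ⟨N + 1, N.succ_pos, fun n hn => ?_⟩
  obtain ⟨hcount, hkm⟩ := hN n (by omega)
  set m := n / (ℓ + 1)
  have hroom : k + Fintype.card (Fin ℓ × Fin m) ≤ n := by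
    have : m * (ℓ + 1) ≤ n := Nat.div_mul_le_self n (ℓ + 1)
    simp only [Fintype.card_prod, Fintype.card_fin]
    nlinarith
  have hchoose : (Fintype.card (Σ _ : Fin r, Fin n)).choose k ≤ r ^ k * n ^ k := by
    simpa [mul_pow] using Nat.choose_le_pow (r * n) k
  apply rainbowIndex_le_of_forall_exists_trees (m := m)
  · intro S hS
    obtain ⟨D, hD, hdisj⟩ := exists_doubleStar_family (P := Fin ℓ × Fin m)
      (i := ⟨0, by omega⟩) (j := ⟨1, by omega⟩) (Fin.ne_of_val_ne zero_ne_one) S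
      (by simpa [hS] using hroom) (by simpa [hS] using hroom)
    exact ⟨D, by simpa [hS] using hD, hdisj⟩
  · calc _ ≤ r ^ k * n ^ k * ℓ * (q ^ q - q !) ^ m := by gcongr
      _ = ℓ * r ^ k * n ^ k * (q ^ q - q !) ^ m := by ring
      _ < (q ^ q) ^ m := hcount

theorem rx_multipartite_le_succ (k ℓ r : ℕ) (hk : 3 ≤ k) (hr : 3 ≤ r) (hℓ : 1 ≤ ℓ) :
    ∃ N : ℕ, 0 < N ∧ ∀ n : ℕ, N ≤ n →
      rainbowIndex (completeMultipartiteGraph (fun _ : Fin r => Fin n)) k ℓ ≤ k + 1 :=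
  rx_multipartite_le_succ_general k ℓ r hr
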